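/- arXiv:1707.04708 — 2 statements merged into one kernel-verified Lean document; each statement's English description precedes it below -/
import Mathlib

section
/- Let (G_t)_{t∈T} be a family of strictly pseudoconvex domains as in the Standing Situation. Then there exists R > 0 such that for every t ∈ T and every ζ ∈ ∂G_t the set G_t ∩ B(ζ, R) is connected. -/
open Complex MeasureTheory Metric Set

noncomputable section

/-- `ℂⁿ` as a Euclidean space. -/
abbrev Cn (n : ℕ) := EuclideanSpace ℂ (Fin n)

instance (n : ℕ) : MeasurableSpace (Cn n) := borel _
instance (n : ℕ) : BorelSpace (Cn n) := ⟨rfl⟩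

/-- For a real-valued `C²` function `r`, the Wirtinger pairing
`∂r(z)(X) = Σ_j (∂r/∂z_j)(z) X_j`, expressed through the real differential:
`Σ_j (∂r/∂z_j)(z) X_j = (1/2)(Dr(z)(X) - i·Dr(z)(iX))`. -/
def wirtingerPairing {n : ℕ} (r : Cn n → ℝ) (z X : Cn n) : ℂ :=
  (1 / 2 : ℂ) * ((fderiv ℝ r z X : ℂ) - Complex.I * (fderiv ℝ r z (Complex.I • X) : ℂ))

/-- The Levi form `L_r(z;X) = Σ_{j,k} (∂²r/∂z_j∂z̄_k)(z) X_j X̄_k`, expressed through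
the real second differential as `(1/4)(D²r(z)(X,X) + D²r(z)(iX,iX))`. -/
def leviForm {n : ℕ} (r : Cn n → ℝ) (z X : Cn n) : ℝ :=
  (1 / 4) * (iteratedFDeriv ℝ 2 r z ![X, X]
    + iteratedFDeriv ℝ 2 r z ![Complex.I • X, Complex.I • X])

/-- `r ∈ C²(U,ℝ)` is a defining function for `G` on the neighborhood `U` of `∂G`:
(I) `G ∩ U = {r < 0}`, (II) `(ℂⁿ ∖ cl G) ∩ U = {r > 0}`, (III) `∇r ≠ 0` on `∂G`. -/
def IsDefiningFunction {n : ℕ} (G U : Set (Cn n)) (r : Cn n → ℝ) : Prop :=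
  ContDiffOn ℝ 2 r U ∧
  G ∩ U = {z ∈ U | r z < 0} ∧
  (closure G)ᶜ ∩ U = {z ∈ U | 0 < r z} ∧
  ∀ z ∈ frontier G, fderiv ℝ r z ≠ 0

/-- A bounded strictly pseudoconvex domain with `C²` boundary: a bounded (nonempty,
connected, open) set admitting a `C²` defining function on a neighborhood `U` of its
boundary whose Levi form is positive on nonzero complex tangent vectors. -/
def IsStrictlyPseudoconvexDomain {n : ℕ} (G : Set (Cn n)) : Prop :=
  IsOpen G ∧ IsConnected G ∧ Bornology.IsBounded G ∧
  ∃ (U : Set (Cn n)) (r : Cn n → ℝ), IsOpen U ∧ frontier G ⊆ U ∧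
    IsDefiningFunction G U r ∧
    ∀ z ∈ frontier G, ∀ X : Cn n, X ≠ 0 → wirtingerPairing r z X = 0 → 0 < leviForm r z X

/-- `f ∈ L²_h(D)`: `f` is holomorphic on `D` and square integrable on `D`. -/
def MemL2h {n : ℕ} (D : Set (Cn n)) (f : Cn n → ℂ) : Prop :=
  DifferentiableOn ℂ f D ∧ IntegrableOn (fun z => ‖f z‖ ^ 2) D volume

/-- The `L²(D)` norm `(∫_D |f|² dλ)^{1/2}`. -/
def l2norm {n : ℕ} (D : Set (Cn n)) (f : Cn n → ℂ) : ℝ :=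
  Real.sqrt (∫ z in D, ‖f z‖ ^ 2)

/-- The Bergman kernel of `D` restricted to the diagonal:
`𝔎_D(z) = sup{|f(z)|² : f ∈ L²_h(D), ‖f‖_{L²(D)} ≤ 1}`. -/
def bergmanKernel {n : ℕ} (D : Set (Cn n)) (z : Cn n) : ℝ :=
  sSup {y : ℝ | ∃ f : Cn n → ℂ, MemL2h D f ∧ l2norm D f ≤ 1 ∧ y = ‖f z‖ ^ 2}

/-- `M_D(z;X) = sup{|f'_X(z)| : f ∈ L²_h(D), ‖f‖_{L²(D)} ≤ 1, f(z) = 0}`, where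
`f'_X(z) = Σ_j (∂f/∂z_j)(z) X_j` is the complex derivative of `f` at `z` in direction `X`. -/
def bergmanM {n : ℕ} (D : Set (Cn n)) (z X : Cn n) : ℝ :=
  sSup {y : ℝ | ∃ f : Cn n → ℂ,
    MemL2h D f ∧ l2norm D f ≤ 1 ∧ f z = 0 ∧ y = ‖fderiv ℂ f z X‖}

/-- The Bergman metric `β_D(z;X) = M_D(z;X)/√(𝔎_D(z))`. -/
def bergmanMetric {n : ℕ} (D : Set (Cn n)) (z X : Cn n) : ℝ :=
  bergmanM D z X / Real.sqrt (bergmanKernel D z)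

/-- The Standing Situation: a family `(G_t)_{t∈T}` of bounded strictly pseudoconvex
domains with `C²` boundaries, `T` a compact metric space, with an open set `U` with
compact closure such that (i) `⋃_t ∂G_t` is relatively compact in `U`, (ii) each `G_t`
has a defining function `r_t ∈ C²(U)` whose Levi form is positive on `U × (ℂⁿ∖{0})`,
and (iii) `t ↦ r_t` is uniformly continuous in the `C²(U)` norm. -/
structure StandingSituation (T : Type*) [MetricSpace T] [CompactSpace T] (n : ℕ) where
  G : T → Set (Cn n)
  U : Set (Cn n)
  r : T → Cn n → ℝ
  U_open : IsOpen U
  U_compactClosure : IsCompact (closure U)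
  G_open : ∀ t, IsOpen (G t)
  G_connected : ∀ t, IsConnected (G t)
  G_bounded : ∀ t, Bornology.IsBounded (G t)
  boundaries_relCompact : closure (⋃ t, frontier (G t)) ⊆ U
  defining : ∀ t, IsDefiningFunction (G t) U (r t)
  levi_pos : ∀ t, ∀ z ∈ U, ∀ X : Cn n, X ≠ 0 → 0 < leviForm (r t) z X
  equicont : ∀ ε > 0, ∃ δ > 0, ∀ s t : T, dist s t ≤ δ → ∀ z ∈ U,
    |r t z - r s z| < ε ∧ ‖fderiv ℝ (r t) z - fderiv ℝ (r s) z‖ < ε ∧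
    ‖iteratedFDeriv ℝ 2 (r t) z - iteratedFDeriv ℝ 2 (r s) z‖ < ε

section Auxiliary

set_option maxHeartbeats 1000000

/-- Local star-shapedness lemma: if `r` vanishes at `ζ`, its derivative on `ball ζ R` stays
`κ/16`-close to the derivative `L` at `ζ`, and `ν` is an almost norm-attaining vector for `L`
with `L ν = κ > 0`, then the sublevel set `{r < 0}` inside the ball is star-shaped about
`ζ - (R/2)•ν`, hence connected. -/
lemma star_connected {n : ℕ} (r : Cn n → ℝ) (Φ : Cn n → (Cn n →L[ℝ] ℝ))
    (ζ ν : Cn n) (R κ : ℝ) (hR : 0 < R) (hκ : 0 < κ)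
    (hd : ∀ z ∈ ball ζ R, HasFDerivAt r (Φ z) z)
    (hν : ‖ν‖ ≤ 1) (hLν : Φ ζ ν = κ) (h0 : r ζ = 0)
    (hclose : ∀ z ∈ ball ζ R, ‖Φ z - Φ ζ‖ ≤ κ / 16) :
    IsConnected {z ∈ ball ζ R | r z < 0} := by
  set L := Φ ζ with hL
  set c₀ : Cn n := ζ - (R / 2) • ν with hc₀
  have hζball : ζ ∈ ball ζ R := mem_ball_self hR
  have hc₀ζ : ‖c₀ - ζ‖ ≤ R / 2 := by
    have h1 : c₀ - ζ = -((R / 2) • ν) := by rw [hc₀]; abel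
    rw [h1, norm_neg, norm_smul, Real.norm_eq_abs, _root_.abs_of_nonneg (by linarith)]
    nlinarith
  have hc₀ball : c₀ ∈ ball ζ R := by
    rw [mem_ball, dist_eq_norm]; linarith [hc₀ζ]
  -- key mean value estimate
  have key : ∀ a ∈ ball ζ R, ∀ b ∈ ball ζ R,
      r b - r a - (L b - L a) ≤ κ / 16 * ‖b - a‖ := by
    intro a ha b hb
    have hmvt := Convex.norm_image_sub_le_of_norm_hasFDerivWithin_le
      (f := fun z => r z - L z) (f' := fun z => Φ z - L) (s := ball ζ R) (C := κ / 16)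
      (fun x hx => ((hd x hx).sub L.hasFDerivAt).hasFDerivWithinAt)
      (fun x hx => hclose x hx) (convex_ball ζ R) ha hb
    have h1 : r b - L b - (r a - L a) ≤ ‖r b - L b - (r a - L a)‖ :=
      le_trans (le_abs_self _) (by rw [Real.norm_eq_abs])
    calc r b - r a - (L b - L a) = r b - L b - (r a - L a) := by ring
      _ ≤ ‖r b - L b - (r a - L a)‖ := h1
      _ ≤ κ / 16 * ‖b - a‖ := hmvt
  have hLc₀ : L c₀ - L ζ = -(R / 2) * κ := by
    rw [hc₀]
    have h2 : L (ζ - (R / 2) • ν) = L ζ - (R / 2) * L ν := by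
      rw [map_sub, L.map_smul]; simp
    rw [h2, hLν]; ring
  -- star-shapedness
  have main : ∀ z ∈ ball ζ R, r z < 0 → ∀ w ∈ segment ℝ c₀ z, r w < 0 := by
    intro z hz hrz w hw
    have hwball : w ∈ ball ζ R := (convex_ball ζ R).segment_subset hc₀ball hz hw
    obtain ⟨σ, τ, hσ, hτ, hστ, rfl⟩ := hw
    have hζz : ‖ζ - z‖ < R := by
      have h3 := mem_ball.mp hz; rw [dist_eq_norm] at h3
      rwa [norm_sub_rev]
    set η := L z - L ζ with hη
    rcases le_or_gt η (-(κ * R / 4)) with hcase | hcase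
    · -- absolute bound
      have hLw : L (σ • c₀ + τ • z) - L ζ ≤ -(κ * R / 4) := by
        have h4 : L (σ • c₀ + τ • z) - L ζ = σ * (L c₀ - L ζ) + τ * (L z - L ζ) := by
          rw [map_add, L.map_smul, L.map_smul]
          simp only [smul_eq_mul]
          linear_combination L ζ * hστ
        rw [h4, hLc₀, ← hη]
        have e1 : τ * η ≤ τ * (-(κ * R / 4)) := mul_le_mul_of_nonneg_left hcase hτ
        have e2 : σ * (-(R / 2) * κ) ≤ σ * (-(κ * R / 4)) :=
          mul_le_mul_of_nonneg_left (by nlinarith) hσ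
        have e3 : σ * (-(κ * R / 4)) + τ * (-(κ * R / 4)) = -(κ * R / 4) := by
          linear_combination (-(κ * R / 4)) * hστ
        linarith
      have hwn : ‖σ • c₀ + τ • z - ζ‖ ≤ R := by
        have h5 := mem_ball.mp hwball; rw [dist_eq_norm] at h5; linarith
      have h6 := key ζ hζball (σ • c₀ + τ • z) hwball
      rw [h0] at h6
      nlinarith [h6, hLw, hwn, norm_nonneg (σ • c₀ + τ • z - ζ)]
    · -- relative bound
      have hwzeq : σ • c₀ + τ • z - z = σ • (c₀ - z) := by
        have h7 : τ = 1 - σ := by linarith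
        rw [h7]; module
      have hLdiff : L (σ • c₀ + τ • z) - L z = σ * (-η - R / 2 * κ) := by
        have h8 : L (σ • c₀ + τ • z) - L z = L (σ • c₀ + τ • z - z) := by
          rw [map_sub]
        have h9 : L (c₀ - z) = (L c₀ - L ζ) - (L z - L ζ) := by rw [map_sub]; ring
        rw [h8, hwzeq, L.map_smul]
        simp only [smul_eq_mul, h9, hLc₀, ← hη]
        ring
      have hnorm : ‖σ • c₀ + τ • z - z‖ ≤ σ * (3 * R / 2) := by
        rw [hwzeq, norm_smul, Real.norm_eq_abs, _root_.abs_of_nonneg hσ]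
        have h10 : ‖c₀ - z‖ ≤ ‖c₀ - ζ‖ + ‖ζ - z‖ := by
          have h10' : c₀ - z = (c₀ - ζ) + (ζ - z) := by abel
          rw [h10']; exact norm_add_le _ _
        nlinarith [h10, hc₀ζ, hζz.le]
      have h11 := key z hz (σ • c₀ + τ • z) hwball
      nlinarith [h11, hLdiff, hnorm, norm_nonneg (σ • c₀ + τ • z - z)]
  have hrc₀ : r c₀ < 0 := by
    have h12 := key ζ hζball c₀ hc₀ball
    rw [h0] at h12
    nlinarith [h12, hLc₀, hc₀ζ, norm_nonneg (c₀ - ζ)]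
  constructor
  · exact ⟨c₀, hc₀ball, hrc₀⟩
  · apply isPreconnected_of_forall c₀
    rintro y ⟨hyball, hry⟩
    refine ⟨segment ℝ c₀ y, ?_, left_mem_segment ℝ c₀ y, right_mem_segment ℝ c₀ y,
      (convex_segment c₀ y).isPreconnected⟩
    intro w hw
    exact ⟨(convex_ball ζ R).segment_subset hc₀ball hyball hw, main y hyball hry w hw⟩

end Auxiliary

set_option maxHeartbeats 2000000 in
/-- For a family as in the Standing Situation there is a uniform `R > 0`
such that `G_t ∩ B(ζ,R)` is connected for every `t ∈ T` and `ζ ∈ ∂G_t`. -/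
theorem uniform_connected_radius {T : Type*} [MetricSpace T] [CompactSpace T] {n : ℕ}
    (S : StandingSituation T n) :
    ∃ R : ℝ, 0 < R ∧ ∀ t : T, ∀ ζ ∈ frontier (S.G t),
      IsConnected (S.G t ∩ ball ζ R) := by
  classical
  set K := closure (⋃ t, frontier (S.G t)) with hKdef
  have hKU : K ⊆ S.U := S.boundaries_relCompact
  have hKcl : IsCompact K :=
    IsCompact.of_isClosed_subset S.U_compactClosure isClosed_closure
      (hKU.trans subset_closure)
  have hCd : ∀ t, ContDiffOn ℝ 2 (S.r t) S.U := fun t => (S.defining t).1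
  have hfr_sub : ∀ t, frontier (S.G t) ⊆ K :=
    fun t => (subset_iUnion (fun t => frontier (S.G t)) t).trans subset_closure
  -- boundary points are zeros of the defining function
  have hfr0 : ∀ t, ∀ ζ ∈ frontier (S.G t), S.r t ζ = 0 := by
    intro t ζ hζ
    have hζU : ζ ∈ S.U := hKU (hfr_sub t hζ)
    have hcl : ζ ∈ closure (S.G t) := hζ.1
    have hnG : ζ ∉ S.G t := fun h => hζ.2 (by rw [(S.G_open t).interior_eq]; exact h)
    have h1 : ¬ S.r t ζ < 0 := by
      intro h
      have : ζ ∈ S.G t ∩ S.U := by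
        rw [(S.defining t).2.1]; exact ⟨hζU, h⟩
      exact hnG this.1
    have h2 : ¬ 0 < S.r t ζ := by
      intro h
      have : ζ ∈ (closure (S.G t))ᶜ ∩ S.U := by
        rw [(S.defining t).2.2.1]; exact ⟨hζU, h⟩
      exact this.1 hcl
    linarith [lt_or_ge (S.r t ζ) 0, le_of_not_gt h1, le_of_not_gt h2]
  -- zeros of the defining function in U are boundary points
  have hfr_of : ∀ t, ∀ z ∈ S.U, S.r t z = 0 → z ∈ frontier (S.G t) := by
    intro t z hzU hz0
    have hnG : z ∉ S.G t := by
      intro h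
      have : z ∈ S.G t ∩ S.U := ⟨h, hzU⟩
      rw [(S.defining t).2.1] at this
      linarith [this.2]
    have hcl : z ∈ closure (S.G t) := by
      by_contra h
      have : z ∈ (closure (S.G t))ᶜ ∩ S.U := ⟨h, hzU⟩
      rw [(S.defining t).2.2.1] at this
      linarith [this.2]
    exact ⟨hcl, fun hi => hnG (by rw [(S.G_open t).interior_eq] at hi; exact hi)⟩
  -- joint continuity of the derivative
  set Φ : T × Cn n → (Cn n →L[ℝ] ℝ) := fun p => fderiv ℝ (S.r p.1) p.2 with hΦdef
  have hΦ : ∀ p : T × Cn n, p.2 ∈ S.U → ContinuousAt Φ p := by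
    rintro ⟨t₀, z₀⟩ hp
    rw [Metric.continuousAt_iff]
    intro ε hε
    obtain ⟨δ₁, hδ₁pos, hδ₁⟩ := S.equicont (ε / 2) (by linarith)
    have hfc : ContinuousOn (fderiv ℝ (S.r t₀)) S.U :=
      (hCd t₀).continuousOn_fderiv_of_isOpen S.U_open one_le_two
    have hca : ContinuousAt (fderiv ℝ (S.r t₀)) z₀ := hfc.continuousAt (S.U_open.mem_nhds hp)
    rw [Metric.continuousAt_iff] at hca
    obtain ⟨δ₂, hδ₂pos, hδ₂⟩ := hca (ε / 2) (by linarith)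
    obtain ⟨δ₃, hδ₃pos, hδ₃⟩ := Metric.isOpen_iff.mp S.U_open z₀ hp
    refine ⟨min δ₁ (min δ₂ δ₃), by positivity, ?_⟩
    rintro ⟨t, z⟩ hq
    rw [Prod.dist_eq] at hq
    have hq1 : dist t t₀ ≤ δ₁ := le_trans (le_max_left _ _) (le_trans hq.le (min_le_left _ _))
    have hq' : dist z z₀ < min δ₁ (min δ₂ δ₃) := (le_max_right (dist t t₀) _).trans_lt hq
    have hq2 : dist z z₀ < δ₂ := hq'.trans_le ((min_le_right _ _).trans (min_le_left _ _))
    have hq3 : z ∈ S.U := hδ₃ (mem_ball.mpr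
      (hq'.trans_le ((min_le_right _ _).trans (min_le_right _ _))))
    have h1 := (hδ₁ t₀ t (by rwa [dist_comm] at hq1) z hq3).2.1
    have h2 := hδ₂ hq2
    calc dist (Φ (t, z)) (Φ (t₀, z₀))
        ≤ dist (Φ (t, z)) (fderiv ℝ (S.r t₀) z) + dist (fderiv ℝ (S.r t₀) z) (Φ (t₀, z₀)) :=
          dist_triangle _ _ _
      _ < ε / 2 + ε / 2 := by
          refine add_lt_add ?_ h2
          rw [dist_eq_norm]
          exact h1
      _ = ε := by ring
  -- joint continuity of the value
  set ρfun : T × Cn n → ℝ := fun p => S.r p.1 p.2 with hρdef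
  have hρ : ∀ p : T × Cn n, p.2 ∈ S.U → ContinuousAt ρfun p := by
    rintro ⟨t₀, z₀⟩ hp
    rw [Metric.continuousAt_iff]
    intro ε hε
    obtain ⟨δ₁, hδ₁pos, hδ₁⟩ := S.equicont (ε / 2) (by linarith)
    have hfc : ContinuousOn (S.r t₀) S.U := (hCd t₀).continuousOn
    have hca : ContinuousAt (S.r t₀) z₀ := hfc.continuousAt (S.U_open.mem_nhds hp)
    rw [Metric.continuousAt_iff] at hca
    obtain ⟨δ₂, hδ₂pos, hδ₂⟩ := hca (ε / 2) (by linarith)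
    obtain ⟨δ₃, hδ₃pos, hδ₃⟩ := Metric.isOpen_iff.mp S.U_open z₀ hp
    refine ⟨min δ₁ (min δ₂ δ₃), by positivity, ?_⟩
    rintro ⟨t, z⟩ hq
    rw [Prod.dist_eq] at hq
    have hq1 : dist t t₀ ≤ δ₁ := le_trans (le_max_left _ _) (le_trans hq.le (min_le_left _ _))
    have hq' : dist z z₀ < min δ₁ (min δ₂ δ₃) := (le_max_right (dist t t₀) _).trans_lt hq
    have hq2 : dist z z₀ < δ₂ := hq'.trans_le ((min_le_right _ _).trans (min_le_left _ _))
    have hq3 : z ∈ S.U := hδ₃ (mem_ball.mpr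
      (hq'.trans_le ((min_le_right _ _).trans (min_le_right _ _))))
    have h1 := (hδ₁ t₀ t (by rwa [dist_comm] at hq1) z hq3).1
    have h2 := hδ₂ hq2
    calc dist (ρfun (t, z)) (ρfun (t₀, z₀))
        ≤ dist (ρfun (t, z)) (S.r t₀ z) + dist (S.r t₀ z) (ρfun (t₀, z₀)) := dist_triangle _ _ _
      _ < ε / 2 + ε / 2 := by
          refine add_lt_add ?_ h2
          rw [Real.dist_eq]
          exact h1
      _ = ε := by ring
  -- the compact set of zeros over the boundary region
  set F : Set (T × Cn n) := (univ ×ˢ K) ∩ ρfun ⁻¹' {0} with hFdef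
  have hρK : ContinuousOn ρfun (univ ×ˢ K) := fun p hp =>
    (hρ p (hKU hp.2)).continuousWithinAt
  have hFclosed : IsClosed F :=
    hρK.preimage_isClosed_of_isClosed (isClosed_univ.prod hKcl.isClosed) isClosed_singleton
  have hFcompact : IsCompact F :=
    IsCompact.of_isClosed_subset (isCompact_univ.prod hKcl) hFclosed inter_subset_left
  have hBPF : ∀ t, ∀ ζ ∈ frontier (S.G t), (t, ζ) ∈ F := by
    intro t ζ hζ
    exact ⟨⟨mem_univ t, hfr_sub t hζ⟩, by simp [hρdef, hfr0 t ζ hζ]⟩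
  -- uniform lower bound on the gradient along boundaries
  obtain ⟨c₁, hc₁pos, hc₁⟩ : ∃ c₁ > 0, ∀ p ∈ F, c₁ ≤ ‖Φ p‖ := by
    rcases F.eq_empty_or_nonempty with hFe | hFne
    · exact ⟨1, one_pos, by simp [hFe]⟩
    · have hgcont : ContinuousOn (fun p => ‖Φ p‖) F := fun p hp =>
        ((hΦ p (hKU hp.1.2)).continuousWithinAt).norm
      obtain ⟨p₀, hp₀F, hp₀⟩ := hFcompact.exists_isMinOn hFne hgcont
      refine ⟨‖Φ p₀‖, ?_, fun p hp => hp₀ hp⟩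
      have hz0 : ρfun p₀ = 0 := by
        have := hp₀F.2; simpa using this
      have hfr : p₀.2 ∈ frontier (S.G p₀.1) := hfr_of p₀.1 p₀.2 (hKU hp₀F.1.2) hz0
      have hne : Φ p₀ ≠ 0 := (S.defining p₀.1).2.2.2 p₀.2 hfr
      exact norm_pos_iff.mpr hne
  -- a compact thickening of K inside U
  obtain ⟨ρ₀, hρ₀pos, hρ₀sub⟩ := hKcl.exists_cthickening_subset_open S.U_open hKU
  set K' := cthickening ρ₀ K with hK'def
  have hK'c : IsCompact K' := hKcl.cthickening
  -- uniform continuity of Φ on T × K'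
  have hΦK' : ContinuousOn Φ (univ ×ˢ K') := fun p hp =>
    (hΦ p (hρ₀sub hp.2)).continuousWithinAt
  have hUC := (isCompact_univ.prod hK'c).uniformContinuousOn_of_continuous hΦK'
  rw [Metric.uniformContinuousOn_iff_le] at hUC
  obtain ⟨δ, hδpos, hδ⟩ := hUC (c₁ / 32) (by positivity)
  refine ⟨min ρ₀ δ, lt_min hρ₀pos hδpos, ?_⟩
  set R := min ρ₀ δ with hRdef
  have hRpos : 0 < R := lt_min hρ₀pos hδpos
  intro t ζ hζ
  have hζK : ζ ∈ K := hfr_sub t hζ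
  have hζU : ζ ∈ S.U := hKU hζK
  have hballK' : ∀ z ∈ ball ζ R, z ∈ K' := by
    intro z hz
    exact mem_cthickening_of_dist_le z ζ ρ₀ K hζK
      (le_trans (mem_ball.mp hz).le (min_le_left _ _))
  have hballU : ∀ z ∈ ball ζ R, z ∈ S.U := fun z hz => hρ₀sub (hballK' z hz)
  set L : Cn n →L[ℝ] ℝ := fderiv ℝ (S.r t) ζ with hLdef
  have hLF : (t, ζ) ∈ F := hBPF t ζ hζ
  have hLn : c₁ ≤ ‖L‖ := hc₁ (t, ζ) hLF
  -- a nearly norm-attaining vector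
  obtain ⟨ν, hν1, hνκ⟩ : ∃ ν : Cn n, ‖ν‖ ≤ 1 ∧ ‖L‖ / 2 < L ν := by
    obtain ⟨x, hx1, hx2⟩ := L.exists_lt_apply_of_lt_opNorm (r := ‖L‖ / 2) (by linarith)
    rw [Real.norm_eq_abs] at hx2
    rcases le_or_gt 0 (L x) with h | h
    · exact ⟨x, hx1.le, by rwa [_root_.abs_of_nonneg h] at hx2⟩
    · refine ⟨-x, by rw [norm_neg]; exact hx1.le, ?_⟩
      rw [map_neg]
      rwa [_root_.abs_of_neg h] at hx2
  set κ := L ν with hκdef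
  have hκpos : 0 < κ := lt_trans (by linarith) hνκ
  -- closeness of derivatives on the ball
  have hclose : ∀ z ∈ ball ζ R, ‖fderiv ℝ (S.r t) z - L‖ ≤ κ / 16 := by
    intro z hz
    have h1 : (t, z) ∈ univ ×ˢ K' := ⟨mem_univ t, hballK' z hz⟩
    have h2 : (t, ζ) ∈ univ ×ˢ K' := ⟨mem_univ t, self_subset_cthickening K hζK⟩
    have h3 : dist ((t, z) : T × Cn n) (t, ζ) ≤ δ := by
      rw [Prod.dist_eq]
      apply max_le
      · simp [hδpos.le]
      · exact le_trans (mem_ball.mp hz).le (min_le_right _ _)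
    have h4 := hδ (t, z) h1 (t, ζ) h2 h3
    rw [dist_eq_norm] at h4
    calc ‖fderiv ℝ (S.r t) z - L‖ = ‖Φ (t, z) - Φ (t, ζ)‖ := rfl
      _ ≤ c₁ / 32 := h4
      _ ≤ κ / 16 := by linarith
  -- differentiability on the ball
  have hd : ∀ z ∈ ball ζ R, HasFDerivAt (S.r t) (fderiv ℝ (S.r t) z) z := by
    intro z hz
    have hdiff : DifferentiableOn ℝ (S.r t) S.U := (hCd t).differentiableOn two_ne_zero
    exact (hdiff.differentiableAt (S.U_open.mem_nhds (hballU z hz))).hasFDerivAt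
  -- apply the local lemma
  have hconn := star_connected (S.r t) (fun z => fderiv ℝ (S.r t) z) ζ ν R κ hRpos hκpos
    hd hν1 rfl (hfr0 t ζ hζ) hclose
  have hset : S.G t ∩ ball ζ R = {z ∈ ball ζ R | S.r t z < 0} := by
    ext z
    constructor
    · rintro ⟨hzG, hzB⟩
      have hmem : z ∈ S.G t ∩ S.U := ⟨hzG, hballU z hzB⟩
      rw [(S.defining t).2.1] at hmem
      exact ⟨hzB, hmem.2⟩
    · rintro ⟨hzB, hzr⟩
      have hmem : z ∈ {z ∈ S.U | S.r t z < 0} := ⟨hballU z hzB, hzr⟩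
      rw [← (S.defining t).2.1] at hmem
      exact ⟨hmem.1, hzB⟩
  rw [hset]
  exact hconn
end
end

section
/- Let G ⊂ ℂⁿ be a bounded strictly pseudoconvex domain with C² boundary. Then the neighborhood U of ∂G and the defining function r ∈ C²(U, ℝ) can be chosen so that, in addition to the defining conditions, the Levi form of r satisfies L_r(z; X) > 0 for every z ∈ U and every nonzero X ∈ ℂⁿ. -/
open Complex MeasureTheory Metric Set

noncomputable section

lemma leviForm_smul {n : ℕ} (f : Cn n → ℝ) (z : Cn n) (c : ℝ) (X : Cn n) :
    leviForm f z (c • X) = c ^ 2 * leviForm f z X := by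
  have key : ∀ Y : Cn n, iteratedFDeriv ℝ 2 f z ![c • Y, c • Y]
      = c ^ 2 * iteratedFDeriv ℝ 2 f z ![Y, Y] := by
    intro Y
    have hv : (![c • Y, c • Y] : Fin 2 → Cn n) = fun i => c • (![Y, Y] i) := by
      funext i; fin_cases i <;> rfl
    rw [hv, (iteratedFDeriv ℝ 2 f z).map_smul_univ (fun _ => c) ![Y, Y]]
    simp [smul_eq_mul, Fin.prod_univ_two]; try ring
  have hI : Complex.I • (c • X) = c • (Complex.I • X) := smul_comm _ _ _
  unfold leviForm
  rw [hI, key, key]; ring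

lemma norm_sq_wirt (a b : ℝ) :
    ‖(1/2 : ℂ) * ((a : ℂ) - Complex.I * (b : ℂ))‖ ^ 2 = (1/4) * (a^2 + b^2) := by
  rw [norm_mul, mul_pow, Complex.sq_norm,
    Complex.sq_norm, Complex.normSq_apply, Complex.normSq_apply]
  simp [Complex.mul_re, Complex.mul_im]
  ring

lemma fderiv_quad {n : ℕ} {r : Cn n → ℝ} {U : Set (Cn n)} (hU : IsOpen U)
    (hr : ContDiffOn ℝ 2 r U) (μ : ℝ) {w : Cn n} (hw : w ∈ U) :
    fderiv ℝ (fun x => r x + μ * (r x * r x)) w = (1 + 2*μ*r w) • fderiv ℝ r w := by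
  have hd : DifferentiableAt ℝ r w :=
    (hr.contDiffAt (hU.mem_nhds hw)).differentiableAt (by norm_num)
  have h1 : HasFDerivAt r (fderiv ℝ r w) w := hd.hasFDerivAt
  have h3 := h1.add ((h1.mul h1).const_mul μ)
  rw [show (fun x => r x + μ * (r x * r x)) = (r + fun y => μ * (r * r) y) from rfl, h3.fderiv]
  ext y
  simp [ContinuousLinearMap.smul_apply, smul_eq_mul]
  ring

lemma levi_quad {n : ℕ} {r : Cn n → ℝ} {U : Set (Cn n)} (hU : IsOpen U)
    (hr : ContDiffOn ℝ 2 r U) (μ : ℝ) {z : Cn n} (hz : z ∈ U) (X : Cn n) :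
    leviForm (fun x => r x + μ * (r x * r x)) z X
      = (1 + 2*μ*r z) * leviForm r z X + 2*μ*‖wirtingerPairing r z X‖^2 := by
  have hca : ContDiffAt ℝ 2 r z := hr.contDiffAt (hU.mem_nhds hz)
  have hdφ : DifferentiableAt ℝ (fderiv ℝ r) z :=
    (hca.fderiv_right (m := 1) (by norm_num)).differentiableAt (by norm_num)
  have hd : DifferentiableAt ℝ r z := hca.differentiableAt (by norm_num)
  -- the first derivative of the modified function agrees with the smul expression near z
  have hEq : (fderiv ℝ (fun x => r x + μ * (r x * r x)))
      =ᶠ[nhds z] (fun w => (1 + 2*μ*r w) • fderiv ℝ r w) :=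
    Filter.eventuallyEq_of_mem (hU.mem_nhds hz) (fun w hw => fderiv_quad hU hr μ hw)
  have hc' : HasFDerivAt (fun w => 1 + 2*μ*r w) ((2*μ) • fderiv ℝ r z) z := by
    simpa using (hd.hasFDerivAt.const_mul (2*μ)).const_add 1
  have hsm : HasFDerivAt (fun w => (1 + 2*μ*r w) • fderiv ℝ r w)
      ((1 + 2*μ*r z) • fderiv ℝ (fderiv ℝ r) z
        + ((2*μ) • fderiv ℝ r z).smulRight (fderiv ℝ r z)) z :=
    hc'.smul hdφ.hasFDerivAt
  have h2nd : fderiv ℝ (fderiv ℝ (fun x => r x + μ * (r x * r x))) z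
      = (1 + 2*μ*r z) • fderiv ℝ (fderiv ℝ r) z
        + ((2*μ) • fderiv ℝ r z).smulRight (fderiv ℝ r z) := by
    rw [hEq.fderiv_eq]; exact hsm.fderiv
  have hit : ∀ Y : Cn n, iteratedFDeriv ℝ 2 (fun x => r x + μ * (r x * r x)) z ![Y, Y]
      = (1 + 2*μ*r z) * iteratedFDeriv ℝ 2 r z ![Y, Y]
        + 2*μ*(fderiv ℝ r z Y)*(fderiv ℝ r z Y) := by
    intro Y
    rw [iteratedFDeriv_two_apply, iteratedFDeriv_two_apply, h2nd]
    simp [ContinuousLinearMap.smul_apply, ContinuousLinearMap.add_apply,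
      ContinuousLinearMap.smulRight_apply, smul_eq_mul]
    try ring
  unfold leviForm wirtingerPairing
  rw [hit, hit, norm_sq_wirt]
  ring

lemma continuity_levi {n : ℕ} {r : Cn n → ℝ} {U : Set (Cn n)} (hU : IsOpen U)
    (hr : ContDiffOn ℝ 2 r U) :
    ContinuousOn (fun p : Cn n × Cn n => leviForm r p.1 p.2) (U ×ˢ (univ : Set (Cn n))) := by
  have hT : ContinuousOn (iteratedFDeriv ℝ 2 r) U := by
    have h := hr.continuousOn_iteratedFDerivWithin (m := 2) (by norm_num) hU.uniqueDiffOn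
    exact h.congr (fun z hz => (iteratedFDerivWithin_of_isOpen 2 hU hz).symm)
  have hTp : ContinuousOn (fun p : Cn n × Cn n => iteratedFDeriv ℝ 2 r p.1)
      (U ×ˢ (univ : Set (Cn n))) :=
    hT.comp continuous_fst.continuousOn (fun p hp => hp.1)
  have hvec : ∀ (g : Cn n × Cn n → Cn n), Continuous g →
      Continuous (fun p : Cn n × Cn n => (![g p, g p] : Fin 2 → Cn n)) := by
    intro g hg
    apply continuous_pi
    intro i
    fin_cases i <;> simpa using hg
  have heval : ∀ (g : Cn n × Cn n → Cn n), Continuous g →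
      ContinuousOn (fun p : Cn n × Cn n => iteratedFDeriv ℝ 2 r p.1 ![g p, g p])
        (U ×ˢ (univ : Set (Cn n))) := by
    intro g hg
    exact continuous_eval.comp_continuousOn (hTp.prodMk ((hvec g hg).continuousOn))
  have h1 := heval (fun p => p.2) continuous_snd
  have h2 := heval (fun p => Complex.I • p.2) (continuous_snd.const_smul Complex.I)
  exact (continuousOn_const.mul (h1.add h2)).congr (fun p hp => rfl)

lemma continuity_wirt {n : ℕ} {r : Cn n → ℝ} {U : Set (Cn n)} (hU : IsOpen U)
    (hr : ContDiffOn ℝ 2 r U) :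
    ContinuousOn (fun p : Cn n × Cn n => ‖wirtingerPairing r p.1 p.2‖ ^ 2)
      (U ×ˢ (univ : Set (Cn n))) := by
  have hφ : ContinuousOn (fderiv ℝ r) U :=
    hr.continuousOn_fderiv_of_isOpen hU (by norm_num)
  have hφp : ContinuousOn (fun p : Cn n × Cn n => fderiv ℝ r p.1)
      (U ×ˢ (univ : Set (Cn n))) := hφ.comp continuous_fst.continuousOn (fun p hp => hp.1)
  have happ : ∀ (g : Cn n × Cn n → Cn n), Continuous g →
      ContinuousOn (fun p : Cn n × Cn n => fderiv ℝ r p.1 (g p))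
        (U ×ˢ (univ : Set (Cn n))) := by
    intro g hg
    exact isBoundedBilinearMap_apply.continuous.comp_continuousOn
      (hφp.prodMk hg.continuousOn)
  have h1 := happ (fun p => p.2) continuous_snd
  have h2 := happ (fun p => Complex.I • p.2) (continuous_snd.const_smul Complex.I)
  have : ContinuousOn (fun p : Cn n × Cn n => wirtingerPairing r p.1 p.2)
      (U ×ˢ (univ : Set (Cn n))) := by
    unfold wirtingerPairing
    exact continuousOn_const.mul
      ((Complex.continuous_ofReal.comp_continuousOn h1).sub
        (continuousOn_const.mul (Complex.continuous_ofReal.comp_continuousOn h2)))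
  exact (this.norm).pow 2

lemma exists_mu {α : Type*} [TopologicalSpace α] [T2Space α] {K : Set α} (hK : IsCompact K)
    {L Q : α → ℝ} (hL : ContinuousOn L K) (hQ : ContinuousOn Q K)
    (hQ0 : ∀ p ∈ K, 0 ≤ Q p)
    (hpos : ∀ p ∈ K, Q p = 0 → 0 < L p) :
    ∃ μ : ℝ, 0 < μ ∧ ∀ p ∈ K, 0 < L p + 2*μ*Q p := by
  have hK0cl : IsClosed (K ∩ L ⁻¹' (Iic 0)) :=
    hL.preimage_isClosed_of_isClosed hK.isClosed isClosed_Iic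
  have hK0c : IsCompact (K ∩ L ⁻¹' (Iic 0)) :=
    hK.of_isClosed_subset hK0cl inter_subset_left
  rcases (K ∩ L ⁻¹' (Iic 0)).eq_empty_or_nonempty with hE | hNE
  · refine ⟨1, one_pos, fun p hp => ?_⟩
    have hLp : 0 < L p := by
      by_contra h
      push_neg at h
      have hmem : p ∈ K ∩ L ⁻¹' (Iic 0) := ⟨hp, h⟩
      rw [hE] at hmem
      exact absurd hmem (notMem_empty p)
    have := hQ0 p hp
    nlinarith
  · obtain ⟨q0, hq0, hq0min⟩ := hK0c.exists_isMinOn hNE (hQ.mono inter_subset_left)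
    obtain ⟨q1, hq1, hq1min⟩ := hK.exists_isMinOn ⟨q0, hq0.1⟩ hL
    set c := Q q0 with hcdef
    set M := L q1 with hMdef
    have hc : 0 < c := by
      rcases (hQ0 q0 hq0.1).lt_or_eq with h | h
      · exact h
      · exact absurd (hpos q0 hq0.1 h.symm) (not_lt.mpr hq0.2)
    refine ⟨max 1 ((1 - M)/(2*c)), lt_of_lt_of_le one_pos (le_max_left _ _), fun p hp => ?_⟩
    set μ := max 1 ((1 - M)/(2*c)) with hμdef
    have hμ1 : (1:ℝ) ≤ μ := le_max_left _ _
    have hμ2 : (1 - M)/(2*c) ≤ μ := le_max_right _ _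
    rcases le_or_gt (L p) 0 with h | h
    · have hpK0 : p ∈ K ∩ L ⁻¹' (Iic 0) := ⟨hp, h⟩
      have hQp : c ≤ Q p := hq0min hpK0
      have hM : M ≤ L p := hq1min hp
      have h2c : (0:ℝ) < 2*c := by linarith
      have hdiv : 1 - M ≤ μ * (2*c) := by
        rw [div_le_iff₀ h2c] at hμ2; linarith
      nlinarith [mul_le_mul_of_nonneg_left hQp (by linarith : (0:ℝ) ≤ 2*μ)]
    · have := hQ0 p hp
      nlinarith


set_option maxHeartbeats 1000000 in
/-- For a bounded strictly pseudoconvex domain with `C²` boundary, the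
neighborhood `U` of `∂G` and the defining function `r` can be chosen so that the Levi
form of `r` is positive on `U × (ℂⁿ ∖ {0})`. -/
theorem strict_psh_defining_function {n : ℕ} (G : Set (Cn n))
    (hG : IsStrictlyPseudoconvexDomain G) :
    ∃ (U : Set (Cn n)) (r : Cn n → ℝ), IsOpen U ∧ frontier G ⊆ U ∧
      IsDefiningFunction G U r ∧
      ∀ z ∈ U, ∀ X : Cn n, X ≠ 0 → 0 < leviForm r z X := by
  obtain ⟨hGopen, hGconn, hGbdd, U, r, hUopen, hfrU, ⟨hC2, hI, hII, hIII⟩, hLevi⟩ := hG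
  -- the boundary is compact
  have hclG : IsCompact (closure G) :=
    Metric.isCompact_of_isClosed_isBounded isClosed_closure hGbdd.closure
  have hKfr : IsCompact (frontier G) :=
    hclG.of_isClosed_subset isClosed_frontier frontier_subset_closure
  -- r vanishes on the boundary
  have hr0 : ∀ z ∈ frontier G, r z = 0 := by
    intro z hz
    have hzU : z ∈ U := hfrU hz
    have hz' : z ∈ closure G \ G := hGopen.frontier_eq ▸ hz
    by_contra hne
    rcases lt_or_gt_of_ne hne with hlt | hgt
    · exact hz'.2 ((Set.ext_iff.mp hI z).mpr ⟨hzU, hlt⟩).1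
    · exact ((Set.ext_iff.mp hII z).mpr ⟨hzU, hgt⟩).1 hz'.1
  -- continuity of the Levi form and the Wirtinger pairing
  have hLc := continuity_levi hUopen hC2
  have hQc := continuity_wirt hUopen hC2
  -- the compact set ∂G × S
  set K : Set (Cn n × Cn n) := (frontier G) ×ˢ sphere (0 : Cn n) 1 with hKdef
  have hKcomp : IsCompact K := hKfr.prod (isCompact_sphere 0 1)
  have hKU : K ⊆ U ×ˢ (univ : Set (Cn n)) := prod_mono hfrU (subset_univ _)
  -- choose μ
  have hposK : ∀ p ∈ K, ‖wirtingerPairing r p.1 p.2‖^2 = 0 → 0 < leviForm r p.1 p.2 := by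
    rintro ⟨z, X⟩ hp hq
    have hzf : z ∈ frontier G := hp.1
    have hXs : X ∈ sphere (0 : Cn n) 1 := hp.2
    have hX0 : X ≠ 0 := by
      intro h
      rw [mem_sphere_zero_iff_norm, h, norm_zero] at hXs
      norm_num at hXs
    have hw0 : wirtingerPairing r z X = 0 := by
      have := pow_eq_zero_iff (n := 2) (by norm_num) |>.mp hq
      exact norm_eq_zero.mp this
    exact hLevi z hzf X hX0 hw0
  obtain ⟨μ, hμpos, hμ⟩ := exists_mu hKcomp (hLc.mono hKU) (hQc.mono hKU)
    (fun p _ => by positivity) hposK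
  -- the modified function and auxiliary sets
  set F : Cn n × Cn n → ℝ := fun p =>
    (1 + 2*μ*r p.1) * leviForm r p.1 p.2 + 2*μ*‖wirtingerPairing r p.1 p.2‖^2 with hFdef
  have hrfst : ContinuousOn (fun p : Cn n × Cn n => r p.1) (U ×ˢ (univ : Set (Cn n))) :=
    hC2.continuousOn.comp continuous_fst.continuousOn (fun p hp => hp.1)
  have hFc : ContinuousOn F (U ×ˢ (univ : Set (Cn n))) :=
    ((continuousOn_const.add (continuousOn_const.mul hrfst)).mul hLc).add
      (continuousOn_const.mul hQc)
  have h2μ : 0 < 1/(2*μ) := by positivity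
  set V0 : Set (Cn n) := U ∩ r ⁻¹' Ioo (-(1/(2*μ))) (1/(2*μ)) with hV0def
  have hV0open : IsOpen V0 :=
    hC2.continuousOn.isOpen_inter_preimage hUopen isOpen_Ioo
  have hfrV0 : frontier G ⊆ V0 := fun z hz =>
    ⟨hfrU hz, by rw [mem_preimage, hr0 z hz]; exact ⟨by linarith, h2μ⟩⟩
  have hWopen : IsOpen ((U ×ˢ (univ : Set (Cn n))) ∩ F ⁻¹' Ioi 0) :=
    hFc.isOpen_inter_preimage (hUopen.prod isOpen_univ) isOpen_Ioi
  have hKW : K ⊆ ((U ×ˢ (univ : Set (Cn n))) ∩ F ⁻¹' Ioi 0) ∩ (V0 ×ˢ (univ : Set (Cn n))) := by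
    rintro ⟨z, X⟩ hp
    have hzf : z ∈ frontier G := hp.1
    refine ⟨⟨hKU hp, ?_⟩, ⟨hfrV0 hzf, mem_univ _⟩⟩
    have hF0 : F (z, X) = leviForm r z X + 2*μ*‖wirtingerPairing r z X‖^2 := by
      simp [hFdef, hr0 z hzf]
    have := hμ (z, X) hp
    rw [mem_preimage, mem_Ioi, hF0]
    linarith
  obtain ⟨u, v, huo, hvo, hfru, hsv, huv⟩ :=
    generalized_tube_lemma hKfr (isCompact_sphere (0 : Cn n) 1)
      (hWopen.inter (hV0open.prod isOpen_univ)) hKW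
  -- sign equivalences on V0
  have hμhalf : μ * (1/(2*μ)) = 1/2 := by field_simp
  have hsign : ∀ z ∈ V0, (0 < 1 + μ * r z) := by
    rintro z ⟨hzU, hz1, hz2⟩
    nlinarith [mul_lt_mul_of_pos_left hz1 hμpos]
  have hsub : u ∩ V0 ⊆ U := fun z hz => hz.2.1
  refine ⟨u ∩ V0, fun x => r x + μ * (r x * r x), huo.inter hV0open,
    subset_inter hfru hfrV0, ⟨?_, ?_, ?_, ?_⟩, ?_⟩
  · exact (hC2.mono hsub).add (contDiffOn_const.mul ((hC2.mono hsub).mul (hC2.mono hsub)))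
  · ext z
    simp only [mem_inter_iff, mem_setOf_eq]
    constructor
    · rintro ⟨hzG, hzuv⟩
      have hfac := hsign z hzuv.2
      have hrz : r z < 0 := ((Set.ext_iff.mp hI z).mp ⟨hzG, hzuv.2.1⟩).2
      exact ⟨hzuv, by nlinarith [mul_pos (neg_pos.mpr hrz) hfac]⟩
    · rintro ⟨hzuv, hneg⟩
      have hfac := hsign z hzuv.2
      have hrz : r z < 0 := by
        by_contra h
        push_neg at h
        nlinarith [mul_nonneg h hfac.le]
      exact ⟨((Set.ext_iff.mp hI z).mpr ⟨hzuv.2.1, hrz⟩).1, hzuv⟩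
  · ext z
    simp only [mem_inter_iff, mem_setOf_eq]
    constructor
    · rintro ⟨hzG, hzuv⟩
      have hfac := hsign z hzuv.2
      have hrz : 0 < r z := ((Set.ext_iff.mp hII z).mp ⟨hzG, hzuv.2.1⟩).2
      exact ⟨hzuv, by nlinarith [mul_pos hrz hfac]⟩
    · rintro ⟨hzuv, hpos⟩
      have hfac := hsign z hzuv.2
      have hrz : 0 < r z := by
        by_contra h
        push_neg at h
        nlinarith [mul_nonneg (neg_nonneg.mpr h) hfac.le]
      exact ⟨((Set.ext_iff.mp hII z).mpr ⟨hzuv.2.1, hrz⟩).1, hzuv⟩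
  · intro z hz
    rw [fderiv_quad hUopen hC2 μ (hfrU hz), hr0 z hz]
    simp only [mul_zero, add_zero, one_smul]
    exact hIII z hz
  · intro z hz X hX
    have hzU : z ∈ U := hz.2.1
    have hXn : ‖X‖ ≠ 0 := norm_ne_zero_iff.mpr hX
    set Y := ‖X‖⁻¹ • X with hYdef
    have hYs : Y ∈ sphere (0 : Cn n) 1 := by
      rw [mem_sphere_zero_iff_norm, hYdef, norm_smul, norm_inv, norm_norm,
        inv_mul_cancel₀ hXn]
    have hmem := huv (mk_mem_prod hz.1 (hsv hYs))
    have hF : 0 < F (z, Y) := hmem.1.2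
    have hXeq : X = ‖X‖ • Y := by
      rw [hYdef, smul_smul, mul_inv_cancel₀ hXn, one_smul]
    have hlevi : leviForm (fun x => r x + μ * (r x * r x)) z Y = F (z, Y) := by
      rw [levi_quad hUopen hC2 μ hzU]
    rw [hXeq, leviForm_smul, hlevi]
    exact mul_pos (pow_pos (norm_pos_iff.mpr hX) 2) hF
end
end
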